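/- arXiv:2404.17969 — 6 statements merged into one kernel-verified Lean document; each statement's English description precedes it below -/
import Mathlib

section
/- Every bordered word has a unique nonempty border which is itself unbordered. -/
open List

variable {α : Type*} [LinearOrder α]

/-- `b` is a border of `w`: a proper prefix of `w` which is also a suffix of `w`. -/
def Border (b w : List α) : Prop := b <+: w ∧ b ≠ w ∧ b <:+ w

/-- `w` is bordered if it has a nonempty border. -/
def Bordered (w : List α) : Prop := ∃ b : List α, b ≠ [] ∧ Border b w

/-- `w` is unbordered if it has no nonempty border. -/
def Unbordered (w : List α) : Prop := ¬ Bordered w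

/-- The lexicographic order on words induced by the order on letters. -/
def Lt (x y : List α) : Prop := List.Lex (· < ·) x y

/-- Lexicographic order w.r.t. the inverse order on letters. -/
def AntiLt (x y : List α) : Prop := List.Lex (fun a b : α => b < a) x y

/-- Lyndon word: nonempty and strictly smaller than `v ++ u` for each
nontrivial factorization `w = u ++ v`. -/
def Lyndon (w : List α) : Prop :=
  w ≠ [] ∧ ∀ u v : List α, u ≠ [] → v ≠ [] → w = u ++ v → Lt w (v ++ u)

/-- Anti-Lyndon word: Lyndon word w.r.t. the inverse lexicographic order. -/
def AntiLyndon (w : List α) : Prop :=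
  w ≠ [] ∧ ∀ u v : List α, u ≠ [] → v ≠ [] → w = u ++ v → AntiLt w (v ++ u)

/-- Inverse Lyndon word: every nonempty proper suffix is lexicographically
smaller than the word itself. -/
def InvLyndon (w : List α) : Prop :=
  w ≠ [] ∧ ∀ s : List α, s <:+ w → s ≠ [] → s ≠ w → Lt s w

/-- `x ≪ y` : `x ≺ y` and `x` is not a proper prefix of `y`. -/
def Ll (x y : List α) : Prop := Lt x y ∧ ¬ (x <+: y ∧ x ≠ y)

/-- The power `x^k` of a word. -/
def wpow (x : List α) (k : ℕ) : List α := (List.replicate k x).flatten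

/-- A nonempty word is primitive if it is not a proper power. -/
def Primitive (w : List α) : Prop :=
  w ≠ [] ∧ ∀ (x : List α) (k : ℕ), w = wpow x k → k = 1

/-- A necklace: a power of a Lyndon word. -/
def Necklace (w : List α) : Prop := ∃ (ℓ : List α) (k : ℕ), Lyndon ℓ ∧ w = wpow ℓ k

/-- A prenecklace: a prefix of a necklace. -/
def Prenecklace (w : List α) : Prop := ∃ v : List α, Necklace v ∧ w <+: v

/-- `L` is the Lyndon factorization of `w`: `w` is the concatenation of the
elements of `L`, all Lyndon words, in nonincreasing lexicographic order. -/
def IsCFL (L : List (List α)) (w : List α) : Prop :=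
  (∀ x ∈ L, Lyndon x) ∧ L.flatten = w ∧ List.Chain' (fun a b => Lt b a ∨ b = a) L

/-- `L` is the Lyndon factorization of `w` w.r.t. the inverse order. -/
def IsCFLin (L : List (List α)) (w : List α) : Prop :=
  (∀ x ∈ L, AntiLyndon x) ∧ L.flatten = w ∧ List.Chain' (fun a b => AntiLt b a ∨ b = a) L

/-- Concatenation `ℓ a ++ ℓ (a+1) ++ ⋯ ++ ℓ b`. -/
def cat (ℓ : ℕ → List α) (a b : ℕ) : List α := ((List.range' a (b + 1 - a)).map ℓ).flatten

lemma border_trans {c b w : List α} (hc : Border c b) (hb : Border b w) : Border c w := by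
  obtain ⟨hp, hne, hs⟩ := hc
  obtain ⟨hp', hne', hs'⟩ := hb
  refine ⟨hp.trans hp', ?_, hs.trans hs'⟩
  rintro rfl
  exact hne' (hp'.eq_of_length_le hp.length_le)

lemma border_length_lt {b w : List α} (h : Border b w) : b.length < w.length :=
  lt_of_le_of_ne h.1.length_le (fun e => h.2.1 (h.1.eq_of_length e))

lemma exists_unbordered_border (w : List α) :
    ∀ n (b : List α), b.length ≤ n → b ≠ [] → Border b w →
      ∃ c : List α, c ≠ [] ∧ Border c w ∧ Unbordered c := by
  intro n
  induction n with
  | zero => intro b hb hne _; exact absurd (List.length_eq_zero_iff.mp (Nat.le_zero.mp hb)) hne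
  | succ n ih =>
    intro b hb hne hbw
    by_cases hub : Unbordered b
    · exact ⟨b, hne, hbw, hub⟩
    · obtain ⟨c, hcne, hcb⟩ := not_not.mp hub
      have := border_length_lt hcb
      exact ih c (by omega) hcne (border_trans hcb hbw)

/-- Every bordered word has a unique nonempty border which is itself unbordered. -/
theorem stmt0 (w : List α) (hw : Bordered w) :
    ∃! b : List α, b ≠ [] ∧ Border b w ∧ Unbordered b := by
  obtain ⟨b, hne, hbw⟩ := hw
  obtain ⟨c, hcne, hcw, hcu⟩ :=
    exists_unbordered_border w b.length b le_rfl hne hbw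
  refine ⟨c, ⟨hcne, hcw, hcu⟩, ?_⟩
  rintro d ⟨hdne, hdw, hdu⟩
  rcases lt_trichotomy d.length c.length with h | h | h
  · exact absurd ⟨d, hdne, List.prefix_of_prefix_length_le hdw.1 hcw.1 h.le,
      fun e => absurd (e ▸ h) (lt_irrefl _),
      List.suffix_of_suffix_length_le hdw.2.2 hcw.2.2 h.le⟩ hcu
  · exact (List.prefix_of_prefix_length_le hdw.1 hcw.1 h.le).eq_of_length h
  · exact absurd ⟨c, hcne, List.prefix_of_prefix_length_le hcw.1 hdw.1 h.le,
      fun e => absurd (e ▸ h) (lt_irrefl _),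
      List.suffix_of_suffix_length_le hcw.2.2 hdw.2.2 h.le⟩ hdu
end

section
/- Any nonempty prefix of an inverse Lyndon word is an inverse Lyndon word. -/
open List

variable {α : Type*} [LinearOrder α]

lemma lex_append_aux {r : α → α → Prop} :
    ∀ (s p t t' : List α), s.length < p.length → List.Lex r (s ++ t) (p ++ t') →
      List.Lex r s p ∨ s <+: p
  | [], [], _, _, h, _ => by omega
  | [], _ :: _, _, _, _, _ => Or.inr ((_ :: _).nil_prefix)
  | _ :: _, [], _, _, h, _ => by simp at h
  | a :: s', b :: p', t, t', hlen, hlex => by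
    cases hlex with
    | rel h => exact Or.inl (List.Lex.rel h)
    | cons h =>
      rcases lex_append_aux s' p' t t' (by simpa using hlen) h with h' | h'
      · exact Or.inl (List.Lex.cons h')
      · obtain ⟨u, rfl⟩ := h'
        exact Or.inr ⟨u, by simp⟩

lemma prefix_lex {r : α → α → Prop} :
    ∀ {s p : List α}, s ≠ p → s <+: p → List.Lex r s p
  | [], [], h, _ => absurd rfl h
  | [], _ :: _, _, _ => List.Lex.nil
  | _ :: _, [], _, hp => by simp at hp
  | a :: s', b :: p', h, hp => by
    obtain ⟨rfl, h'⟩ := List.cons_prefix_cons.mp hp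
    exact List.Lex.cons (prefix_lex (fun he => h (by rw [he])) h')

/-- Any nonempty prefix of an inverse Lyndon word is an inverse Lyndon word. -/
theorem stmt7 (w p : List α) (hw : InvLyndon w) (hp : p <+: w) (hpne : p ≠ []) :
    InvLyndon p := by
  refine ⟨hpne, ?_⟩
  intro s hs hsne hsnp
  obtain ⟨t, ht⟩ := hp
  obtain ⟨u, hu⟩ := hs
  have hune : u ≠ [] := by rintro rfl; exact hsnp (by simpa using hu)
  have hlen : s.length < p.length := by
    rw [← hu, List.length_append]
    have : 0 < u.length := List.length_pos_iff.mpr hune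
    omega
  have hsuf : (s ++ t) <:+ w := ⟨u, by rw [← ht, ← hu, List.append_assoc]⟩
  have h1 : Lt (s ++ t) w := by
    apply hw.2 _ hsuf
    · simp [hsne]
    · intro h
      have hle := congrArg List.length h
      rw [← ht, ← hu] at hle
      simp at hle
      exact hune hle
  rw [← ht] at h1
  have h2 := lex_append_aux s p t t hlen h1
  rcases h2 with h | h
  · exact h
  · exact prefix_lex hsnp h
end

section
/- A word w ∈ Σ⁺ is an anti-Lyndon word (i.e., a Lyndon word with respect to the inverse lexicographic order) if and only if w is an unbordered inverse Lyndon word. -/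
open List

variable {α : Type*} [LinearOrder α]

section AuxLemmas

variable {r : α → α → Prop}

lemma aux_lex_asymm (hr : ∀ a b, r a b → r b a → False) :
    ∀ {x y : List α}, List.Lex r x y → List.Lex r y x → False := by
  intro x y h1 h2
  induction h1 with
  | nil => cases h2
  | rel h =>
    cases h2 with
    | rel h' => exact hr _ _ h h'
    | cons _ => exact hr _ _ h h
  | cons _ ih =>
    cases h2 with
    | rel h' => exact hr _ _ h' h'
    | cons h2' => exact ih h2'

lemma aux_lex_append_left (p : List α) {x y : List α} (h : List.Lex r x y) :
    List.Lex r (p ++ x) (p ++ y) := by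
  induction p with
  | nil => exact h
  | cons a p ih => exact List.Lex.cons ih

lemma aux_lex_of_append_left (hirr : ∀ a, ¬ r a a) (p : List α) {x y : List α}
    (h : List.Lex r (p ++ x) (p ++ y)) : List.Lex r x y := by
  induction p with
  | nil => exact h
  | cons a p ih =>
    cases h with
    | rel h' => exact absurd h' (hirr a)
    | cons h' => exact ih h'

lemma aux_lex_append_of_not_prefix {x y : List α} (h : List.Lex r x y)
    (hnp : ¬ x <+: y) : ∀ s t, List.Lex r (x ++ s) (y ++ t) := by
  induction h with
  | nil => exact absurd (List.nil_prefix) hnp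
  | rel h' => exact fun s t => List.Lex.rel h'
  | @cons a l1 l2 _ ih =>
    intro s t
    exact List.Lex.cons (ih (fun hp => hnp (List.cons_prefix_cons.mpr ⟨rfl, hp⟩)) s t)

lemma aux_lex_append_right_destruct : ∀ {x s : List α} (t : List α),
    List.Lex r x (s ++ t) → List.Lex r x s ∨ s <+: x := by
  intro x s
  induction s generalizing x with
  | nil => exact fun t _ => Or.inr List.nil_prefix
  | cons a s ih =>
    intro t h
    cases x with
    | nil => exact Or.inl List.Lex.nil
    | cons b x =>
      cases h with
      | rel h' => exact Or.inl (List.Lex.rel h')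
      | cons h' =>
        rcases ih t h' with h4 | h4
        · exact Or.inl (List.Lex.cons h4)
        · exact Or.inr (List.cons_prefix_cons.mpr ⟨rfl, h4⟩)

lemma aux_lex_swap {x y : List α} (h : List.Lex (fun a b => r b a) x y) :
    x <+: y ∨ List.Lex r y x := by
  induction h with
  | nil => exact Or.inl List.nil_prefix
  | rel h' => exact Or.inr (List.Lex.rel h')
  | cons _ ih =>
    rcases ih with h4 | h4
    · exact Or.inl (List.cons_prefix_cons.mpr ⟨rfl, h4⟩)
    · exact Or.inr (List.Lex.cons h4)

lemma aux_lex_swap_append {x y : List α} (h : List.Lex r x y) (hnp : ¬ x <+: y) :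
    ∀ s t, List.Lex (fun a b => r b a) (y ++ t) (x ++ s) := by
  induction h with
  | nil => exact absurd List.nil_prefix hnp
  | rel h' => exact fun s t => List.Lex.rel h'
  | cons _ ih =>
    intro s t
    exact List.Lex.cons (ih (fun hp => hnp (List.cons_prefix_cons.mpr ⟨rfl, hp⟩)) s t)

end AuxLemmas

/-- A nonempty word is anti-Lyndon iff it is an unbordered inverse Lyndon word. -/
theorem stmt8 (w : List α) (hw : w ≠ []) :
    AntiLyndon w ↔ (InvLyndon w ∧ Unbordered w) := by
  have hgt_asymm : ∀ a b : α, b < a → a < b → False := fun a b h1 h2 => absurd h1 (asymm h2)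
  have hgt_irrefl : ∀ a : α, ¬ a < a := fun a => lt_irrefl a
  constructor
  · rintro ⟨-, h⟩
    -- first: unbordered
    have hub : Unbordered w := by
      rintro ⟨b, hbne, hpre, hbnw, hsuf⟩
      obtain ⟨v, hv⟩ := hpre
      obtain ⟨u, hu⟩ := hsuf
      have hune : u ≠ [] := by
        rintro rfl; exact hbnw hu
      have hvne : v ≠ [] := by
        rintro rfl; rw [List.append_nil] at hv; exact hbnw hv
      have hlen : v.length = u.length := by
        have : (b ++ v).length = (u ++ b).length := by rw [hv, hu]
        simp at this; omega
      have R1 : AntiLt w (b ++ u) := h u b hune hbne hu.symm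
      have R2 : AntiLt w (v ++ b) := h b v hbne hvne hv.symm
      rw [← hv] at R1
      have hvu : List.Lex (fun a b : α => b < a) v u :=
        aux_lex_of_append_left (r := fun a b : α => b < a) hgt_irrefl b R1
      have hvnu : ¬ v <+: u := by
        intro hp
        have := hp.eq_of_length hlen
        subst this
        exact aux_lex_asymm hgt_asymm hvu hvu
      have R3 : List.Lex (fun a b : α => b < a) (v ++ b) (u ++ b) :=
        aux_lex_append_of_not_prefix hvu hvnu b b
      rw [hu] at R3
      exact aux_lex_asymm hgt_asymm R2 R3
    refine ⟨⟨hw, ?_⟩, hub⟩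
    intro s hsuf hsne hsnw
    obtain ⟨u, hu⟩ := hsuf
    have hune : u ≠ [] := by rintro rfl; exact hsnw hu
    have R : AntiLt w (s ++ u) := h u s hune hsne hu.symm
    rcases aux_lex_append_right_destruct u R with h4 | h4
    · rcases aux_lex_swap h4 with h5 | h5
      · have hls : s.length < w.length := by
          rcases lt_or_eq_of_le (List.IsSuffix.length_le ⟨u, hu⟩) with h6 | h6
          · exact h6
          · exact absurd (List.IsSuffix.eq_of_length ⟨u, hu⟩ h6) hsnw
        have := h5.length_le
        omega
      · exact h5
    · exact absurd ⟨s, hsne, h4, hsnw, ⟨u, hu⟩⟩ hub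
  · rintro ⟨⟨-, hinv⟩, hub⟩
    refine ⟨hw, ?_⟩
    intro u v hu hv heq
    have hvsuf : v <:+ w := ⟨u, heq.symm⟩
    have hvnw : v ≠ w := by
      rintro rfl
      apply hu
      have h7 := congrArg List.length heq
      simp only [List.length_append] at h7
      exact List.eq_nil_of_length_eq_zero (by omega)
    have hlt : Lt v w := hinv v hvsuf hv hvnw
    have hnp : ¬ v <+: w := fun hp => hub ⟨v, hv, hp, hvnw, hvsuf⟩
    have := aux_lex_swap_append hlt hnp u []
    rwa [List.append_nil] at this
end

section
/- A word w ∈ Σ⁺ is an inverse Lyndon word if and only if w is a nonempty anti-prenecklace, i.e., a nonempty prefix of a power of an anti-Lyndon word. -/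
set_option linter.unusedSectionVars false


open List

variable {α : Type*} [LinearOrder α]

/-- `x` differs from `y` at some position in their common domain, with `r`-smaller letter. -/
def Flt (r : α → α → Prop) (x y : List α) : Prop :=
  ∃ c a b, c ++ [a] <+: x ∧ c ++ [b] <+: y ∧ r a b

section Generic

variable {r : α → α → Prop} {x y : List α}

lemma prefix_proper_lex (h : x <+: y) (hne : x ≠ y) : List.Lex r x y := by
  induction x generalizing y with
  | nil =>
    cases y with
    | nil => exact absurd rfl hne
    | cons b ys => exact List.Lex.nil
  | cons a xs ih =>
    cases y with
    | nil => simpa using h.length_le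
    | cons b ys =>
      obtain ⟨rfl, h'⟩ := (List.cons_prefix_cons.mp h)
      exact List.Lex.cons (ih h' (fun he => hne (by rw [he])))

lemma flt_lex (h : Flt r x y) : List.Lex r x y := by
  obtain ⟨c, a, b, hx, hy, hr⟩ := h
  induction c generalizing x y with
  | nil =>
    obtain ⟨t, rfl⟩ := hx
    obtain ⟨u, rfl⟩ := hy
    exact List.Lex.rel hr
  | cons d c' ih =>
    obtain ⟨t, rfl⟩ := hx
    obtain ⟨u, rfl⟩ := hy
    simp only [cons_append, append_assoc]
    exact List.Lex.cons (ih (by simp [List.prefix_append]) (by simp [List.prefix_append]))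

lemma lex_cases (h : List.Lex r x y) : (x <+: y ∧ x ≠ y) ∨ Flt r x y := by
  induction h with
  | nil => exact Or.inl ⟨List.nil_prefix, by simp⟩
  | @cons a l₁ l₂ h ih =>
    rcases ih with ⟨hp, hne⟩ | ⟨c, p, q, h1, h2, hr⟩
    · exact Or.inl ⟨List.cons_prefix_cons.mpr ⟨rfl, hp⟩, by simpa using hne⟩
    · exact Or.inr ⟨a :: c, p, q, List.cons_prefix_cons.mpr ⟨rfl, h1⟩,
        List.cons_prefix_cons.mpr ⟨rfl, h2⟩, hr⟩
  | rel h =>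
    exact Or.inr ⟨[], _, _, ⟨_, rfl⟩, ⟨_, rfl⟩, h⟩

lemma eq_of_snoc_prefix {c : List α} {a b : α} (h1 : c ++ [a] <+: x) (h2 : c ++ [b] <+: x) :
    a = b := by
  have h3 : c ++ [a] <+: c ++ [b] :=
    List.prefix_of_prefix_length_le h1 h2 (by simp)
  have h4 := h3.eq_of_length (by simp)
  simpa using h4

lemma flt_append (h : Flt r x y) (u v : List α) : Flt r (x ++ u) (y ++ v) := by
  obtain ⟨c, a, b, hx, hy, hr⟩ := h
  exact ⟨c, a, b, hx.trans (List.prefix_append x u), hy.trans (List.prefix_append y v), hr⟩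

lemma flt_irrefl (hirr : ∀ a : α, ¬ r a a) (h : Flt r x x) : False := by
  obtain ⟨c, a, b, hx, hy, hr⟩ := h
  obtain rfl := eq_of_snoc_prefix hx hy
  exact hirr a hr

lemma flt_asymm (hirr : ∀ a : α, ¬ r a a)
    (hasy : ∀ a b : α, r a b → r b a → False)
    (h1 : Flt r x y) (h2 : Flt r y x) : False := by
  obtain ⟨c, a, b, hcx, hcy, hab⟩ := h1
  obtain ⟨d, a', b', hdy, hdx, hab'⟩ := h2
  have hcx' : c <+: x := (List.prefix_append c [a]).trans hcx
  have hcy' : c <+: y := (List.prefix_append c [b]).trans hcy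
  have hdy' : d <+: y := (List.prefix_append d [a']).trans hdy
  have hdx' : d <+: x := (List.prefix_append d [b']).trans hdx
  rcases lt_trichotomy c.length d.length with hlt | heq | hgt
  · have h5 : c ++ [a] <+: d := List.prefix_of_prefix_length_le hcx hdx' (by simpa)
    have h6 : c ++ [a] <+: y := h5.trans hdy'
    obtain rfl := eq_of_snoc_prefix h6 hcy
    exact hirr a hab
  · obtain rfl : c = d := (List.prefix_of_prefix_length_le hcx' hdx' heq.le).eq_of_length heq
    obtain rfl := eq_of_snoc_prefix hcx hdx
    obtain rfl := eq_of_snoc_prefix hcy hdy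
    exact hasy _ _ hab hab'
  · have h5 : d ++ [a'] <+: c := List.prefix_of_prefix_length_le hdy hcy' (by simpa)
    have h6 : d ++ [a'] <+: x := h5.trans hcx'
    obtain rfl := eq_of_snoc_prefix h6 hdx
    exact hirr a' hab'

lemma lex_irrefl (hirr : ∀ a : α, ¬ r a a) (h : List.Lex r x x) : False := by
  rcases lex_cases h with ⟨_, hne⟩ | hf
  · exact hne rfl
  · exact flt_irrefl hirr hf

lemma lex_asymm (hirr : ∀ a : α, ¬ r a a)
    (hasy : ∀ a b : α, r a b → r b a → False)
    (h1 : List.Lex r x y) (h2 : List.Lex r y x) : False := by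
  rcases lex_cases h1 with ⟨hp1, hne1⟩ | hf1
  · rcases lex_cases h2 with ⟨hp2, _⟩ | ⟨c, a, b, hcy, hcx, hr⟩
    · exact hne1 (hp1.eq_of_length (le_antisymm hp1.length_le hp2.length_le))
    · obtain rfl := eq_of_snoc_prefix hcy (hcx.trans hp1)
      exact hirr a hr
  · rcases lex_cases h2 with ⟨hp2, _⟩ | hf2
    · obtain ⟨c, a, b, hcx, hcy, hr⟩ := hf1
      obtain rfl := eq_of_snoc_prefix hcx (hcy.trans hp2)
      exact hirr a hr
    · exact flt_asymm hirr hasy hf1 hf2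

lemma lex_append_left (hirr : ∀ a : α, ¬ r a a) {c x y : List α}
    (h : List.Lex r (c ++ x) (c ++ y)) : List.Lex r x y := by
  induction c with
  | nil => exact h
  | cons d c' ih =>
    cases h with
    | cons h => exact ih h
    | rel h => exact absurd h (hirr d)

end Generic
-- continues part1; defs from proof.lean assumed present (AntiLt, AntiLyndon, etc.)

lemma ra_irr : ∀ a : α, ¬ (fun a b : α => b < a) a a := fun a => lt_irrefl a

lemma ra_asy : ∀ a b : α, (fun a b : α => b < a) a b → (fun a b : α => b < a) b a → False :=
  fun _ _ h1 h2 => absurd h2 (lt_asymm h1)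

/-! wpow lemmas -/

lemma wpow_zero (x : List α) : wpow x 0 = [] := rfl


lemma wpow_succ (x : List α) (k : ℕ) : wpow x (k + 1) = x ++ wpow x k := by
  simp only [wpow, List.replicate_succ]
  rw [List.flatten_cons]

lemma wpow_succ' (x : List α) (k : ℕ) : wpow x (k + 1) = wpow x k ++ x := by
  simp only [wpow, List.replicate_succ' (n := k) (a := x)]
  rw [List.flatten_append]
  simp

lemma wpow_one (x : List α) : wpow x 1 = x := by simp [wpow]

lemma length_wpow (x : List α) (k : ℕ) : (wpow x k).length = k * x.length := by
  induction k with
  | zero => simp [wpow]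
  | succ n ih => rw [wpow_succ, List.length_append, ih]; ring

lemma wpow_add (x : List α) (j m : ℕ) : wpow x (j + m) = wpow x j ++ wpow x m := by
  simp only [wpow, List.replicate_add]
  rw [List.flatten_append]

lemma wpow_prefix (x : List α) {j n : ℕ} (h : j ≤ n) : wpow x j <+: wpow x n := by
  obtain ⟨m, rfl⟩ := Nat.exists_eq_add_of_le h
  rw [wpow_add]
  exact List.prefix_append _ _

/-! suffix decomposition helpers -/

lemma suffix_of_append {s x y : List α} (h : s <:+ x ++ y) (hl : s.length ≤ y.length) :
    s <:+ y := by
  obtain ⟨t, ht⟩ := h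
  have hx : x <+: t := by
    apply List.prefix_of_prefix_length_le (List.prefix_append x y) _ _
    · rw [← ht]; exact List.prefix_append t s
    · have := congrArg List.length ht
      simp at this; omega
  obtain ⟨t', rfl⟩ := hx
  refine ⟨t', ?_⟩
  rw [List.append_assoc] at ht
  exact (List.append_cancel_left ht)

lemma suffix_append_of_length {s x y : List α} (h : s <:+ x ++ y) (hl : y.length ≤ s.length) :
    ∃ t', t' <:+ x ∧ s = t' ++ y := by
  obtain ⟨t, ht⟩ := h
  have hx : t <+: x := by
    apply List.prefix_of_prefix_length_le _ (List.prefix_append x y) _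
    · rw [← ht]; exact List.prefix_append t s
    · have := congrArg List.length ht
      simp at this; omega
  obtain ⟨t', rfl⟩ := hx
  rw [List.append_assoc] at ht
  have h2 : s = t' ++ y := List.append_cancel_left ht
  exact ⟨t', ⟨t, rfl⟩, h2⟩

lemma prefix_take {p x : List α} {m : ℕ} (h : p <+: x) (hl : p.length ≤ m) :
    p <+: x.take m := by
  rw [List.prefix_iff_eq_take] at h ⊢
  rw [List.take_take, min_eq_left hl, ← h]

/-! anti-Lyndon suffix characterization -/

lemma antiLyndon_unbordered {ℓ s : List α} (hL : AntiLyndon ℓ) (hsuf : s <:+ ℓ)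
    (hpre : s <+: ℓ) (hne : s ≠ []) (hnl : s ≠ ℓ) : False := by
  obtain ⟨u, hu⟩ := hsuf
  obtain ⟨v, hv⟩ := hpre
  have hune : u ≠ [] := by rintro rfl; exact hnl hu
  have hvne : v ≠ [] := by rintro rfl; rw [List.append_nil] at hv; exact hnl hv
  have h1 : AntiLt ℓ (v ++ s) := hL.2 s v hne hvne hv.symm
  have h2 : AntiLt ℓ (s ++ u) := hL.2 u s hune hne hu.symm
  have h2' : List.Lex (fun a b : α => b < a) v u := by
    have : List.Lex (fun a b : α => b < a) (s ++ v) (s ++ u) := by rw [hv]; exact h2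
    exact lex_append_left (r := fun a b : α => b < a) ra_irr this
  have hlen : u.length = v.length := by
    have h3 := congrArg List.length hu
    have h4 := congrArg List.length hv
    simp at h3 h4; omega
  have h1' : List.Lex (fun a b : α => b < a) (u ++ s) (v ++ s) := by rw [hu]; exact h1
  rcases lex_cases h1' with ⟨hp, hne2⟩ | ⟨c, p, q, hcp, hcq, hr⟩
  · exact hne2 (hp.eq_of_length (by simp [hlen]))
  · rcases le_or_gt u.length c.length with hle | hlt
    · have hcu : c <+: u ++ s := (List.prefix_append c [p]).trans hcp
      have hcv : c <+: v ++ s := (List.prefix_append c [q]).trans hcq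
      have huc : u <+: c := List.prefix_of_prefix_length_le (List.prefix_append u s) hcu hle
      have hvc : v <+: c := List.prefix_of_prefix_length_le (List.prefix_append v s) hcv (by omega)
      obtain rfl : u = v := (List.prefix_of_prefix_length_le huc hvc hlen.le).eq_of_length hlen
      exact lex_irrefl (r := fun a b : α => b < a) ra_irr h2'
    · have hcu : c ++ [p] <+: u :=
        List.prefix_of_prefix_length_le hcp (List.prefix_append u s) (by simpa using hlt)
      have hcv : c ++ [q] <+: v :=
        List.prefix_of_prefix_length_le hcq (List.prefix_append v s) (by simp; omega)
      exact lex_asymm (r := fun a b : α => b < a) ra_irr ra_asy (flt_lex ⟨c, p, q, hcu, hcv, hr⟩) h2'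

lemma antiLyndon_flt_suffix {ℓ s : List α} (hL : AntiLyndon ℓ) (hsuf : s <:+ ℓ)
    (hne : s ≠ []) (hnl : s ≠ ℓ) : Flt (fun a b : α => b < a) ℓ s := by
  obtain ⟨u, hu⟩ := hsuf
  have hune : u ≠ [] := by rintro rfl; exact hnl hu
  have h := hL.2 u s hune hne hu.symm
  rcases lex_cases h with ⟨hp, hne2⟩ | ⟨c, p, q, hcp, hcq, hr⟩
  · exact absurd (hp.eq_of_length (by have := congrArg List.length hu; simp at this ⊢; omega)) hne2
  · rcases le_or_gt s.length c.length with hle | hlt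
    · exfalso
      have hcsu : c <+: s ++ u := (List.prefix_append c [q]).trans hcq
      have hsc : s <+: c := List.prefix_of_prefix_length_le (List.prefix_append s u) hcsu hle
      have hcl : c <+: ℓ := (List.prefix_append c [p]).trans hcp
      exact antiLyndon_unbordered hL ⟨u, hu⟩ (hsc.trans hcl) hne hnl
    · have hcs : c ++ [q] <+: s :=
        List.prefix_of_prefix_length_le hcq (List.prefix_append s u) (by simpa using hlt)
      exact ⟨c, p, q, hcp, hcs, hr⟩

lemma antiLyndon_of_flt {ℓ : List α} (hne : ℓ ≠ [])
    (h : ∀ s, s <:+ ℓ → s ≠ [] → s ≠ ℓ → Flt (fun a b : α => b < a) ℓ s) : AntiLyndon ℓ := by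
  refine ⟨hne, fun u v hu hv heq => ?_⟩
  have hsuf : v <:+ ℓ := ⟨u, heq.symm⟩
  have hvne : v ≠ ℓ := by
    intro h'
    apply hu
    have := congrArg List.length heq
    rw [h'] at this
    simp at this
    exact this
  obtain ⟨c, p, q, hcp, hcq, hr⟩ := h v hsuf hv hvne
  exact flt_lex ⟨c, p, q, hcp, hcq.trans (List.prefix_append v u), hr⟩

lemma take_eq_take_of_prefix {c x : List α} {m : ℕ} (h : c <+: x) (hm : m ≤ c.length) :
    x.take m = c.take m := by
  obtain ⟨t, rfl⟩ := h
  rw [List.take_append_of_le_length hm]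

lemma key {ℓ : List α} (hL : AntiLyndon ℓ) :
    ∀ i n m', i + m' ≤ n * ℓ.length →
      (wpow ℓ n).take m' = ((wpow ℓ n).drop i).take m' ∨
      Flt (fun a b : α => b < a) ((wpow ℓ n).take m') (((wpow ℓ n).drop i).take m') := by
  intro i
  induction i using Nat.strong_induction_on with
  | _ i ih =>
  intro n m' hbound
  have hl : 1 ≤ ℓ.length := List.length_pos_iff.mpr hL.1
  rcases Nat.eq_zero_or_pos i with rfl | hipos
  · left; rw [List.drop_zero]
  rcases Nat.eq_zero_or_pos n with rfl | hn
  · exfalso; omega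
  obtain ⟨n', rfl⟩ : ∃ n', n = n' + 1 := ⟨n - 1, by omega⟩
  have hmul : (n' + 1) * ℓ.length = n' * ℓ.length + ℓ.length := by ring
  rcases le_or_gt ℓ.length i with hge | hlt
  · -- i ≥ |ℓ| : peel one copy of ℓ
    have htake : (wpow ℓ (n' + 1)).take m' = (wpow ℓ n').take m' := by
      rw [wpow_succ']
      exact List.take_append_of_le_length (by rw [length_wpow]; omega)
    have hdrop : (wpow ℓ (n' + 1)).drop i = (wpow ℓ n').drop (i - ℓ.length) := by
      rw [wpow_succ, List.drop_append, List.drop_eq_nil_of_le hge,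
        List.nil_append]
    rw [htake, hdrop]
    exact ih (i - ℓ.length) (by omega) n' m' (by omega)
  · -- 0 < i < |ℓ|
    set t := ℓ.drop i with ht
    have htlen : t.length = ℓ.length - i := by simp [ht]
    have htsuf : t <:+ ℓ := List.drop_suffix i ℓ
    have htne : t ≠ [] := by
      intro h; rw [h] at htlen; simp at htlen; omega
    have htnl : t ≠ ℓ := by
      intro h
      have := congrArg List.length h
      omega
    obtain ⟨c, p, q, hcp, hcq, hr⟩ := antiLyndon_flt_suffix hL htsuf htne htnl
    have hdrop : (wpow ℓ (n' + 1)).drop i = t ++ wpow ℓ n' := by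
      rw [wpow_succ, List.drop_append_of_le_length hlt.le, ht]
    have hcl : c.length + 1 ≤ t.length := by simpa using hcq.length_le
    have htl : t.length ≤ ℓ.length := htsuf.length_le
    rcases le_or_gt m' c.length with hm | hm
    · left
      rw [hdrop, wpow_succ]
      have h1 : (ℓ ++ wpow ℓ n').take m' = ℓ.take m' :=
        List.take_append_of_le_length (by omega)
      have h2 : (t ++ wpow ℓ n').take m' = t.take m' :=
        List.take_append_of_le_length (by omega)
      have h3 : ℓ.take m' = c.take m' :=
        take_eq_take_of_prefix ((List.prefix_append c [p]).trans hcp) hm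
      have h4 : t.take m' = c.take m' :=
        take_eq_take_of_prefix ((List.prefix_append c [q]).trans hcq) hm
      rw [h1, h2, h3, h4]
    · right
      refine ⟨c, p, q, ?_, ?_, hr⟩
      · refine prefix_take ?_ (by simpa using hm)
        refine hcp.trans ?_
        rw [wpow_succ]
        exact List.prefix_append ℓ _
      · rw [hdrop]
        refine prefix_take ?_ (by simpa using hm)
        exact hcq.trans (List.prefix_append t _)

lemma bwd {ℓ w : List α} {n : ℕ} (hL : AntiLyndon ℓ) (hp : w <+: wpow ℓ n) (hw : w ≠ []) :
    InvLyndon w := by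
  refine ⟨hw, fun s hs hsne hsw => ?_⟩
  obtain ⟨t, hts⟩ := hs
  have htne : t ≠ [] := by rintro rfl; exact hsw hts
  have htpos : 1 ≤ t.length := List.length_pos_iff.mpr htne
  have hlen : t.length + s.length = w.length := by
    have := congrArg List.length hts; simpa using this
  obtain ⟨u, hu⟩ := hp
  have hwl : w.length ≤ n * ℓ.length := by
    have := congrArg List.length hu
    simp [length_wpow] at this
    omega
  have hK := key hL t.length n s.length (by omega)
  have e1 : (wpow ℓ n).take s.length = w.take s.length := by
    rw [← hu]
    exact List.take_append_of_le_length (by omega)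
  have e2 : ((wpow ℓ n).drop t.length).take s.length = s := by
    rw [← hu, ← hts, List.append_assoc, List.drop_left, List.take_left]
  rw [e1, e2] at hK
  rcases hK with heq | ⟨c, p, q, hcp, hcq, hr⟩
  · have hpre : s <+: w := heq ▸ List.take_prefix s.length w
    exact prefix_proper_lex hpre hsw
  · exact flt_lex ⟨c, q, p, hcq, hcp.trans (List.take_prefix s.length w), hr⟩

lemma invLyndon_dropLast {w' : List α} {a : α} (h : InvLyndon (w' ++ [a])) (hne : w' ≠ []) :
    InvLyndon w' := by
  refine ⟨hne, fun s hs hsne hsw => ?_⟩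
  have hsl : s.length < w'.length :=
    lt_of_le_of_ne hs.length_le (fun he => hsw (hs.eq_of_length he))
  have hs' : s ++ [a] <:+ w' ++ [a] := by
    obtain ⟨t, ht⟩ := hs
    exact ⟨t, by rw [← List.append_assoc, ht]⟩
  have h1 : Lt (s ++ [a]) (w' ++ [a]) :=
    h.2 (s ++ [a]) hs' (by simp) (by
      intro he
      exact hsw ((List.append_left_inj [a]).mp he))
  rcases lex_cases h1 with ⟨hp, hne2⟩ | ⟨c, x, y, hcx, hcy, hr⟩
  · have h2 : s ++ [a] <+: w' :=
      List.prefix_of_prefix_length_le hp (List.prefix_append w' [a]) (by simp; omega)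
    exact prefix_proper_lex ((List.prefix_append s [a]).trans h2) hsw
  · have hcl : c.length + 1 ≤ s.length + 1 := by simpa using hcx.length_le
    rcases lt_or_eq_of_le (by omega : c.length ≤ s.length) with hlt | heqc
    · have h2 : c ++ [x] <+: s :=
        List.prefix_of_prefix_length_le hcx (List.prefix_append s [a]) (by simpa using hlt)
      have h3 : c ++ [y] <+: w' :=
        List.prefix_of_prefix_length_le hcy (List.prefix_append w' [a]) (by simp; omega)
      exact flt_lex ⟨c, x, y, h2, h3, hr⟩
    · obtain rfl : s = c := by
        have hc : c <+: s ++ [a] := (List.prefix_append c [x]).trans hcx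
        exact ((List.prefix_of_prefix_length_le hc (List.prefix_append s [a])
          (by omega)).eq_of_length heqc).symm
      have h3 : s ++ [y] <+: w' :=
        List.prefix_of_prefix_length_le hcy (List.prefix_append w' [a]) (by simp; omega)
      exact prefix_proper_lex ((List.prefix_append s [y]).trans h3) hsw

lemma duval_suffix {ℓ m : List α} {a b : α} (hL : AntiLyndon ℓ) (hb : m ++ [b] <+: ℓ)
    (hab : a < b) : ∀ k, 1 ≤ k → ∀ s, s <:+ wpow ℓ k ++ (m ++ [a]) → s ≠ [] →
      s ≠ wpow ℓ k ++ (m ++ [a]) → Flt (fun a b : α => b < a) (wpow ℓ k ++ (m ++ [a])) s := by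
  intro k hk
  induction k, hk using Nat.le_induction with
  | base =>
    rw [wpow_one]
    intro s hs hsne hsW
    have hml : m.length + 1 ≤ ℓ.length := by simpa using hb.length_le
    rcases le_or_gt s.length (m.length + 1) with hle | hgt
    · have hs2 : s <:+ m ++ [a] := suffix_of_append hs (by simpa using hle)
      rcases s.eq_nil_or_concat' with rfl | ⟨s', aa, rfl⟩
      · exact absurd rfl hsne
      obtain ⟨t₂, ht₂⟩ := hs2
      rw [← List.append_assoc] at ht₂
      obtain ⟨hts, haa⟩ := List.append_inj' ht₂ (by simp)
      obtain rfl : a = aa := by simpa using haa.symm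
      have hs'm : s' <:+ m := ⟨t₂, hts⟩
      rcases eq_or_ne s' m with rfl | hsm
      · exact ⟨s', b, a, hb.trans (List.prefix_append ℓ _), List.prefix_refl _, hab⟩
      · obtain ⟨x, hx⟩ := hs'm
        have hxne : x ≠ [] := by rintro rfl; exact hsm hx
        have hx1 : 1 ≤ x.length := List.length_pos_iff.mpr hxne
        obtain ⟨e, he⟩ := hb
        have hu' : s' ++ ([b] ++ e) <:+ ℓ := ⟨x, by rw [← he, ← hx]; simp⟩
        have hu'ne : s' ++ ([b] ++ e) ≠ [] := by simp
        have hu'nl : s' ++ ([b] ++ e) ≠ ℓ := by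
          intro hcontra
          have h1 := congrArg List.length hcontra
          have h2 := congrArg List.length he
          have h3 := congrArg List.length hx
          simp at h1 h2 h3
          omega
        obtain ⟨c, p, q, hcp, hcq, hr⟩ := antiLyndon_flt_suffix hL hu' hu'ne hu'nl
        rcases lt_trichotomy c.length s'.length with h1 | h1 | h1
        · have hq : c ++ [q] <+: s' :=
            List.prefix_of_prefix_length_le hcq (List.prefix_append s' _) (by simpa using h1)
          exact ⟨c, p, q, hcp.trans (List.prefix_append ℓ _),
            hq.trans (List.prefix_append s' [a]), hr⟩
        · obtain rfl : s' = c := by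
            have hc : c <+: s' ++ ([b] ++ e) := (List.prefix_append c [q]).trans hcq
            exact ((List.prefix_of_prefix_length_le hc (List.prefix_append s' _)
              h1.le).eq_of_length h1).symm
          obtain rfl : b = q := by
            have hsb : s' ++ [b] <+: s' ++ ([b] ++ e) := ⟨e, by simp⟩
            exact (eq_of_snoc_prefix hcq hsb).symm
          exact ⟨s', p, a, hcp.trans (List.prefix_append ℓ _), List.prefix_refl _,
            lt_trans hab hr⟩
        · have hsb : s' ++ [b] <+: c := by
            have h2 : s' ++ [b] <+: s' ++ ([b] ++ e) := ⟨e, by simp⟩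
            have hc : c <+: s' ++ ([b] ++ e) := (List.prefix_append c [q]).trans hcq
            exact List.prefix_of_prefix_length_le h2 hc (by simpa using h1)
          have h4 : s' ++ [b] <+: ℓ := hsb.trans ((List.prefix_append c [p]).trans hcp)
          exact ⟨s', b, a, h4.trans (List.prefix_append ℓ _), List.prefix_refl _, hab⟩
    · obtain ⟨t', ht'suf, rfl⟩ := suffix_append_of_length hs (by simp; omega)
      have ht'ne : t' ≠ [] := by rintro rfl; simp at hgt
      have ht'nl : t' ≠ ℓ := by rintro rfl; exact hsW rfl
      exact flt_append (antiLyndon_flt_suffix hL ht'suf ht'ne ht'nl) _ _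
  | succ k hk ih =>
    intro s hs hsne hsW
    have hml : m.length + 1 ≤ ℓ.length := by simpa using hb.length_le
    have hW' : wpow ℓ (k + 1) ++ (m ++ [a]) = ℓ ++ (wpow ℓ k ++ (m ++ [a])) := by
      rw [wpow_succ, List.append_assoc]
    set W := wpow ℓ k ++ (m ++ [a]) with hWdef
    rw [hW'] at hs
    have hmW : m <+: ℓ := (List.prefix_append m [b]).trans hb
    rcases lt_trichotomy s.length W.length with h1 | h1 | h1
    · have hsW2 : s <:+ W := suffix_of_append hs h1.le
      have hsne2 : s ≠ W := by intro he; rw [he] at h1; exact lt_irrefl _ h1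
      obtain ⟨c, p, q, hcp, hcq, hr⟩ := ih s hsW2 hsne hsne2
      have hclen : c.length + 1 ≤ s.length := by simpa using hcq.length_le
      have hPW : wpow ℓ k ++ m <+: W := by
        rw [hWdef, ← List.append_assoc]
        exact List.prefix_append _ _
      have hlenP : (wpow ℓ k).length + m.length + 1 = W.length := by
        rw [hWdef]
        simp only [List.length_append, List.length_cons, List.length_nil]
        omega
      have hcpP : c ++ [p] <+: wpow ℓ k ++ m := by
        refine List.prefix_of_prefix_length_le hcp hPW ?_
        rw [List.length_append, List.length_append]
        simp only [List.length_cons, List.length_nil]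
        omega
      have hPW' : wpow ℓ k ++ m <+: wpow ℓ (k + 1) ++ (m ++ [a]) := by
        rw [wpow_succ', List.append_assoc]
        exact (List.prefix_append_right_inj _).mpr (hmW.trans (List.prefix_append ℓ _))
      exact ⟨c, p, q, hcpP.trans hPW', hcq, hr⟩
    · obtain rfl : s = W := (suffix_of_append hs h1.le).eq_of_length h1
      refine ⟨wpow ℓ k ++ m, b, a, ?_, ?_, hab⟩
      · rw [List.append_assoc]
        have h2 : wpow ℓ k ++ (m ++ [b]) <+: wpow ℓ (k + 1) := by
          rw [wpow_succ']
          exact (List.prefix_append_right_inj _).mpr hb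
        exact h2.trans (List.prefix_append _ _)
      · rw [List.append_assoc]
    · obtain ⟨t', ht'suf, rfl⟩ := suffix_append_of_length hs h1.le
      have ht'ne : t' ≠ [] := by rintro rfl; simp at h1
      have ht'nl : t' ≠ ℓ := by rintro rfl; exact hsW hW'.symm
      have hf := flt_append (antiLyndon_flt_suffix hL ht'suf ht'ne ht'nl) W W
      rw [hW']
      exact hf

lemma fwd : ∀ N (w : List α), w.length ≤ N → InvLyndon w →
    ∃ ℓ k m, AntiLyndon ℓ ∧ 1 ≤ k ∧ m <+: ℓ ∧ m ≠ ℓ ∧ w = wpow ℓ k ++ m := by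
  intro N
  induction N with
  | zero =>
    intro w hl hI
    exact absurd (List.eq_nil_of_length_eq_zero (by omega)) hI.1
  | succ N ih =>
    intro w hl hI
    rcases w.eq_nil_or_concat' with rfl | ⟨w', a, rfl⟩
    · exact absurd rfl hI.1
    rcases eq_or_ne w' [] with rfl | hw'ne
    · refine ⟨[a], 1, [], ?_, le_refl 1, List.nil_prefix, by simp, by simp [wpow_one]⟩
      refine ⟨by simp, fun u v hu hv he => ?_⟩
      exfalso
      have h1 := congrArg List.length he
      have hu1 := List.length_pos_iff.mpr hu
      have hv1 := List.length_pos_iff.mpr hv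
      simp at h1
      omega
    · have hI' := invLyndon_dropLast hI hw'ne
      obtain ⟨ℓ, k, m, hL, hk, hm, hmne, hw'⟩ := ih w' (by simp at hl; omega) hI'
      obtain ⟨d, hd⟩ := hm
      have hdne : d ≠ [] := by rintro rfl; rw [List.append_nil] at hd; exact hmne hd
      obtain ⟨b, d', rfl⟩ : ∃ b d', d = b :: d' := by
        cases d with
        | nil => exact absurd rfl hdne
        | cons b d' => exact ⟨b, d', rfl⟩
      have hb : m ++ [b] <+: ℓ := ⟨d', by rw [← hd]; simp⟩
      have hml : m.length + 1 ≤ ℓ.length := by simpa using hb.length_le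
      have hl1 : 1 ≤ ℓ.length := List.length_pos_iff.mpr hL.1
      rcases lt_trichotomy a b with hab | rfl | hba
      · have hW : w' ++ [a] = wpow ℓ k ++ (m ++ [a]) := by rw [hw', List.append_assoc]
        have hAL : AntiLyndon (w' ++ [a]) := by
          rw [hW]
          exact antiLyndon_of_flt (by simp) (duval_suffix hL hb hab k hk)
        exact ⟨w' ++ [a], 1, [], hAL, le_refl 1, List.nil_prefix, by simp,
          by rw [wpow_one]; simp⟩
      · rcases eq_or_ne (m ++ [a]) ℓ with heq | hne2
        · refine ⟨ℓ, k + 1, [], hL, by omega, List.nil_prefix, fun h => hL.1 h.symm, ?_⟩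
          rw [hw', List.append_nil, wpow_succ', List.append_assoc, heq]
        · exact ⟨ℓ, k, m ++ [a], hL, hk, hb, hne2, by rw [hw', List.append_assoc]⟩
      · exfalso
        have hkl : ℓ.length ≤ k * ℓ.length := Nat.le_mul_of_pos_left _ hk
        have hlw : (w' ++ [a]).length = k * ℓ.length + m.length + 1 := by
          rw [hw']; simp [length_wpow]; omega
        have hsuf : m ++ [a] <:+ w' ++ [a] := by
          rw [hw', List.append_assoc]
          exact List.suffix_append _ _
        have hne3 : m ++ [a] ≠ w' ++ [a] := by
          intro he
          have h0 : (m ++ [a]).length = (w' ++ [a]).length := by rw [he]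
          rw [hlw] at h0
          simp only [List.length_append, List.length_cons, List.length_nil] at h0
          omega
        have h1 := hI.2 (m ++ [a]) hsuf (by simp) hne3
        have hbw : m ++ [b] <+: w' ++ [a] := by
          refine hb.trans ?_
          have h2 : wpow ℓ 1 <+: wpow ℓ k := wpow_prefix ℓ hk
          rw [wpow_one] at h2
          refine h2.trans ?_
          rw [hw', List.append_assoc]
          exact List.prefix_append _ _
        rcases lex_cases h1 with ⟨hp, _⟩ | ⟨c, x, y, hcx, hcy, hr⟩
        · exact (ne_of_gt hba) (eq_of_snoc_prefix hp hbw)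
        · have hclen : c.length + 1 ≤ m.length + 1 := by simpa using hcx.length_le
          have hmw : m <+: w' ++ [a] := (List.prefix_append m [b]).trans hbw
          rcases lt_or_eq_of_le (by omega : c.length ≤ m.length) with hlt | heqc
          · have h2 : c ++ [x] <+: m :=
              List.prefix_of_prefix_length_le hcx (List.prefix_append m [a]) (by simpa using hlt)
            have h3 : c ++ [y] <+: m :=
              List.prefix_of_prefix_length_le hcy hmw (by simp; omega)
            have hxy := eq_of_snoc_prefix (h2.trans hmw) (h3.trans hmw)
            exact absurd hr (by rw [hxy]; exact lt_irrefl _)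
          · obtain rfl : m = c := by
              have hc : c <+: m ++ [a] := (List.prefix_append c [x]).trans hcx
              exact ((List.prefix_of_prefix_length_le hc (List.prefix_append m [a])
                (by omega)).eq_of_length heqc).symm
            obtain rfl : a = x := (eq_of_snoc_prefix hcx (List.prefix_refl _)).symm
            obtain rfl : b = y := (eq_of_snoc_prefix hcy hbw).symm
            exact absurd hr (not_lt.mpr hba.le)

/-- A nonempty word is an inverse Lyndon word iff it is a nonempty prefix of a
power of an anti-Lyndon word. -/
theorem stmt9 (w : List α) (hw : w ≠ []) :
    InvLyndon w ↔ ∃ (ℓ : List α) (n : ℕ), AntiLyndon ℓ ∧ w <+: wpow ℓ n := by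
  constructor
  · intro hI
    obtain ⟨ℓ, k, m, hL, hk, hm, hmne, hw2⟩ := fwd w.length w le_rfl hI
    refine ⟨ℓ, k + 1, hL, ?_⟩
    rw [hw2, wpow_succ']
    exact (List.prefix_append_right_inj _).mpr hm
  · rintro ⟨ℓ, n, hL, hp⟩
    exact bwd hL hp hw
end

section
/- Let ℓ₁,…,ℓ_h be anti-Lyndon words forming a non-increasing chain for the prefix order (each ℓ_{i+1} a prefix of ℓ_i), with h ≥ 2, and suppose ℓ₁ = … = ℓ_i ≠ ℓ_{i+1} for some 1 ≤ i < h. If ℓ_{i+1}⋯ℓ_j is a prefix of ℓ₁ for some i < j ≤ h, then |ℓ₁| > |ℓ_{i+1}⋯ℓ_j|. -/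
open List

variable {α : Type*} [LinearOrder α]

lemma lex_append_left_cancel {r : α → α → Prop} [IsIrrefl α r] :
    ∀ (b : List α) {u v : List α}, List.Lex r (b ++ u) (b ++ v) → List.Lex r u v
  | [], _, _, h => h
  | a :: b, u, v, h => lex_append_left_cancel b (List.lex_cons_iff.mp h)

lemma lex_append_of_length_eq {r : α → α → Prop} {u v : List α} (s t : List α)
    (hlen : u.length = v.length) (h : List.Lex r u v) : List.Lex r (u ++ s) (v ++ t) := by
  induction h with
  | nil => simp at hlen
  | @cons a l₁ l₂ h ih => exact List.Lex.cons (ih (by simpa using hlen))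
  | rel h => exact List.Lex.rel h

lemma antiLyndon_unbordered_s16 {w : List α} (hw : AntiLyndon w) : Unbordered w := by
  rintro ⟨b, hbne, hpre, hbw, hsuf⟩
  obtain ⟨v, hv⟩ := hpre
  obtain ⟨u, hu⟩ := hsuf
  have hvne : v ≠ [] := by rintro rfl; simp at hv; exact hbw hv
  have hune : u ≠ [] := by rintro rfl; simp at hu; exact hbw hu
  haveI : IsIrrefl α (fun a b : α => b < a) := ⟨fun a h => lt_irrefl a h⟩
  haveI : IsAsymm α (fun a b : α => b < a) := ⟨fun a b h h' => lt_asymm h h'⟩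
  have h1 : AntiLt w (b ++ u) := hw.2 u b hune hbne hu.symm
  have h2 : AntiLt w (v ++ b) := hw.2 b v hbne hvne hv.symm
  have hlen : v.length = u.length := by
    have := congrArg List.length (hv.trans hu.symm)
    simp at this; omega
  have h3 : List.Lex (fun a b : α => b < a) v u := by
    apply lex_append_left_cancel b
    rw [hv]; exact h1
  have h4 : List.Lex (fun a b : α => b < a) (v ++ b) (u ++ b) :=
    lex_append_of_length_eq _ _ hlen h3
  rw [← hu] at h2
  exact asymm (show List.Lex (fun a b : α => b < a) (u ++ b) (v ++ b) from h2) h4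

/-- In a non-increasing prefix chain of anti-Lyndon words with ℓ₁ = ⋯ = ℓᵢ ≠ ℓᵢ₊₁,
if ℓᵢ₊₁⋯ℓⱼ is a prefix of ℓ₁ then it is strictly shorter than ℓ₁. -/
theorem stmt16 (ℓ : ℕ → List α) (h i j : ℕ) (hh : 2 ≤ h) (hi : 1 ≤ i) (hij : i < j)
    (hjh : j ≤ h)
    (hanti : ∀ t, 1 ≤ t → t ≤ h → AntiLyndon (ℓ t))
    (hchain : ∀ t, 1 ≤ t → t < h → ℓ (t + 1) <+: ℓ t)
    (heq : ∀ t, 1 ≤ t → t ≤ i → ℓ t = ℓ 1) (hne : ℓ (i + 1) ≠ ℓ i)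
    (hpre : cat ℓ (i + 1) j <+: ℓ 1) :
    (cat ℓ (i + 1) j).length < (ℓ 1).length := by
  -- transitive prefix chain
  have key : ∀ s t, 1 ≤ s → s ≤ t → t ≤ h → ℓ t <+: ℓ s := by
    intro s t hs hst hth
    induction t with
    | zero => omega
    | succ n ih =>
      rcases eq_or_lt_of_le hst with heq' | hlt
      · rw [← heq']
      · exact (hchain n (by omega) (by omega)).trans (ih (by omega) (by omega))
  -- ℓ (i+1) is a proper prefix of ℓ 1
  have hip : ℓ (i + 1) <+: ℓ 1 := (heq i hi le_rfl) ▸ hchain i hi (by omega)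
  have hipne : ℓ (i + 1) ≠ ℓ 1 := fun hc => hne (hc.trans (heq i hi le_rfl).symm)
  have hiplt : (ℓ (i + 1)).length < (ℓ 1).length := by
    rcases lt_or_eq_of_le hip.length_le with h' | h'
    · exact h'
    · exact absurd (hip.eq_of_length_le (le_of_eq h'.symm)) hipne
  -- ℓ j is a prefix of ℓ (i+1), hence strictly shorter than ℓ 1
  have hji : ℓ j <+: ℓ (i + 1) := key (i + 1) j (by omega) (by omega) hjh
  have hjlt : (ℓ j).length < (ℓ 1).length := lt_of_le_of_lt hji.length_le hiplt
  -- ℓ j is a suffix of cat ℓ (i+1) j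
  have hsuf : ℓ j <:+ cat ℓ (i + 1) j := by
    have hn : j + 1 - (i + 1) = (j - (i + 1)) + 1 := by omega
    unfold cat
    rw [hn, List.range'_1_concat]
    have : i + 1 + (j - (i + 1)) = j := by omega
    rw [this]
    simp
  by_contra hlen
  push_neg at hlen
  have hcat : cat ℓ (i + 1) j = ℓ 1 := hpre.eq_of_length_le hlen
  rw [hcat] at hsuf
  exact antiLyndon_unbordered_s16 (hanti 1 le_rfl (by omega))
    ⟨ℓ j, (hanti j (by omega) hjh).1, key 1 j le_rfl (by omega) hjh, ne_of_apply_ne List.length (by omega), hsuf⟩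
end

section
/- Let ℓ₁,…,ℓ_h be anti-Lyndon words with ℓ₁ ≥_p … ≥_p ℓ_h, h ≥ 2, and indices 1 ≤ i < j < h with ℓ₁ = … = ℓ_i ≠ ℓ_{i+1}, such that ℓ_{i+1}⋯ℓ_j is a prefix of ℓ₁ but ℓ_{i+1}⋯ℓ_{j+1} is not a prefix of ℓ₁. Then there exist words r,s,s' and letters a < b such that ℓ₁ = ℓ_{i+1}⋯ℓ_j · r a s and ℓ_{j+1} = r b s'; in particular ℓ₁ ≺ ℓ_{i+1}⋯ℓ_{j+1} and ℓ₁ is not a prefix of ℓ_{i+1}⋯ℓ_{j+1}. -/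
open List

variable {α : Type*} [LinearOrder α]

namespace Stmt18Aux

lemma lex_append_iff {r : α → α → Prop} (hr : ∀ a, ¬ r a a) :
    ∀ (p u v : List α), List.Lex r (p ++ u) (p ++ v) ↔ List.Lex r u v
  | [], u, v => Iff.rfl
  | a :: p, u, v => by
    constructor
    · intro hx
      cases hx with
      | cons hx => exact (lex_append_iff hr p u v).mp hx
      | rel hx => exact absurd hx (hr a)
    · intro hx
      exact List.Lex.cons ((lex_append_iff hr p u v).mpr hx)

lemma lex_append_of_length {r : α → α → Prop} {u v : List α}
    (h : List.Lex r u v) : u.length = v.length →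
    ∀ x y : List α, List.Lex r (u ++ x) (v ++ y) := by
  induction h with
  | nil => intro hl; simp at hl
  | cons h ih => intro hl x y; exact List.Lex.cons (ih (by simpa using hl) x y)
  | rel h => intro _ x y; exact List.Lex.rel h

lemma lex_asymm {r : α → α → Prop} (hr : ∀ a b, r a b → ¬ r b a) :
    ∀ {u v : List α}, List.Lex r u v → ¬ List.Lex r v u := by
  intro u v h
  induction h with
  | nil => intro h'; cases h'
  | cons h ih =>
    intro h'
    cases h' with
    | cons h' => exact ih h'
    | rel h' => exact hr _ _ h' h'
  | rel h =>
    intro h'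
    cases h' with
    | cons h' => exact hr _ _ h h
    | rel h' => exact hr _ _ h h'

lemma antiLyndon_border {w b : List α} (hw : AntiLyndon w) (hb : b ≠ [])
    (hp : b <+: w) (hs : b <:+ w) (hbw : b ≠ w) : False := by
  obtain ⟨v, hv⟩ := hp
  obtain ⟨u, hu⟩ := hs
  have hvne : v ≠ [] := by rintro rfl; simp at hv; exact hbw hv
  have hune : u ≠ [] := by rintro rfl; simp at hu; exact hbw hu
  have h1 : AntiLt w (v ++ b) := hw.2 b v hb hvne hv.symm
  have h2 : AntiLt w (b ++ u) := hw.2 u b hune hb hu.symm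
  have h2' : List.Lex (fun a b : α => b < a) v u := by
    rw [AntiLt, ← hv] at h2
    exact (lex_append_iff (r := fun a b : α => b < a) (fun a => lt_irrefl a) b v u).mp h2
  have hlen : v.length = u.length := by
    have := congrArg List.length (hv.trans hu.symm)
    simp at this; omega
  have h3 : List.Lex (fun a b : α => b < a) (v ++ b) (u ++ b) :=
    lex_append_of_length h2' hlen b b
  rw [AntiLt, ← hu] at h1
  exact lex_asymm (fun a b h1 h2 => lt_asymm h1 h2) h3 h1

lemma not_prefix_decomp :
    ∀ (q L : List α), ¬ q <+: L → ¬ L <+: q →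
      ∃ (r : List α) (a b : α) (s s' : List α),
        a ≠ b ∧ q = r ++ a :: s ∧ L = r ++ b :: s'
  | [], L, h1, _ => absurd (List.nil_prefix) h1
  | q :: qs, [], _, h2 => absurd (List.nil_prefix) h2
  | x :: q, y :: L, h1, h2 => by
    by_cases hxy : x = y
    · subst hxy
      have h1' : ¬ q <+: L := fun hx => h1 (List.cons_prefix_cons.mpr ⟨rfl, hx⟩)
      have h2' : ¬ L <+: q := fun hx => h2 (List.cons_prefix_cons.mpr ⟨rfl, hx⟩)
      obtain ⟨r, a, b, s, s', hab, hq, hL⟩ := not_prefix_decomp q L h1' h2'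
      exact ⟨x :: r, a, b, s, s', hab, by simp [hq], by simp [hL]⟩
    · exact ⟨[], x, y, q, L, hxy, rfl, rfl⟩

lemma chain_prefix (ℓ : ℕ → List α) (h : ℕ)
    (hchain : ∀ t, 1 ≤ t → t < h → ℓ (t + 1) <+: ℓ t) :
    ∀ t, t ≤ h → ∀ s, 1 ≤ s → s ≤ t → ℓ t <+: ℓ s := by
  intro t
  induction t with
  | zero => intro _ s hs hst; omega
  | succ n ih =>
    intro hth s hs hst
    rcases Nat.lt_or_ge s (n + 1) with hlt | hge
    · exact (hchain n (by omega) (by omega)).trans (ih (by omega) s hs (by omega))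
    · have : s = n + 1 := by omega
      subst this; exact List.prefix_refl _

lemma cat_concat (ℓ : ℕ → List α) {a b : ℕ} (hab : a ≤ b + 1) :
    cat ℓ a (b + 1) = cat ℓ a b ++ ℓ (b + 1) := by
  unfold cat
  have h1 : b + 1 + 1 - a = (b + 1 - a) + 1 := by omega
  have h2 : a + 1 * (b + 1 - a) = b + 1 := by omega
  rw [h1, List.range'_concat, h2]
  simp

lemma cat_cons (ℓ : ℕ → List α) {a b : ℕ} (hab : a ≤ b) :
    cat ℓ a b = ℓ a ++ cat ℓ (a + 1) b := by
  unfold cat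
  have h1 : b + 1 - a = (b - a) + 1 := by omega
  have h2 : b + 1 - (a + 1) = b - a := by omega
  rw [h1, h2, List.range'_succ]
  simp

end Stmt18Aux

open Stmt18Aux in
/-- If ℓᵢ₊₁⋯ℓⱼ is a prefix of ℓ₁ but ℓᵢ₊₁⋯ℓⱼ₊₁ is not, then
ℓ₁ = ℓᵢ₊₁⋯ℓⱼ r a s and ℓⱼ₊₁ = r b s' with a < b; in particular
ℓ₁ ≺ ℓᵢ₊₁⋯ℓⱼ₊₁ and ℓ₁ is not a prefix of ℓᵢ₊₁⋯ℓⱼ₊₁. -/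
theorem stmt18 (ℓ : ℕ → List α) (h i j : ℕ) (hh : 2 ≤ h) (hi : 1 ≤ i) (hij : i < j)
    (hjh : j < h)
    (hanti : ∀ t, 1 ≤ t → t ≤ h → AntiLyndon (ℓ t))
    (hchain : ∀ t, 1 ≤ t → t < h → ℓ (t + 1) <+: ℓ t)
    (heq : ∀ t, 1 ≤ t → t ≤ i → ℓ t = ℓ 1) (hne : ℓ (i + 1) ≠ ℓ i)
    (hpre : cat ℓ (i + 1) j <+: ℓ 1)
    (hnpre : ¬ cat ℓ (i + 1) (j + 1) <+: ℓ 1) :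
    (∃ (r s s' : List α) (a b : α), a < b ∧
        ℓ 1 = cat ℓ (i + 1) j ++ r ++ a :: s ∧ ℓ (j + 1) = r ++ b :: s') ∧
      Lt (ℓ 1) (cat ℓ (i + 1) (j + 1)) ∧ ¬ ℓ 1 <+: cat ℓ (i + 1) (j + 1) := by
  classical
  have h1h : (1:ℕ) ≤ h := by omega
  have hA1 : AntiLyndon (ℓ 1) := hanti 1 le_rfl h1h
  have hpref := chain_prefix ℓ h hchain
  have hLi : ℓ (j + 1) <+: ℓ (i + 1) :=
    hpref (j + 1) (by omega) (i + 1) (by omega) (by omega)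
  have hi1 : ℓ (i + 1) <+: ℓ 1 := by
    have hx := hpref (i + 1) (by omega) i (by omega) (by omega)
    rwa [heq i hi le_rfl] at hx
  have hne1 : ℓ (i + 1) ≠ ℓ 1 := by rw [← heq i hi le_rfl]; exact hne
  have hlt_len : (ℓ (i + 1)).length < (ℓ 1).length :=
    lt_of_le_of_ne hi1.length_le (fun hl => hne1 (hi1.eq_of_length hl))
  have hL1 : ℓ (j + 1) <+: ℓ 1 := hLi.trans hi1
  set P := cat ℓ (i + 1) j with hP
  have hPsplit : P = ℓ (i + 1) ++ cat ℓ (i + 2) j := cat_cons ℓ (by omega)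
  have hPne : P ≠ [] := by
    rw [hPsplit]
    simp [(hanti (i + 1) (by omega) (by omega)).1]
  obtain ⟨q, hq⟩ := hpre
  have hcat : cat ℓ (i + 1) (j + 1) = P ++ ℓ (j + 1) := cat_concat ℓ (by omega)
  have hnpre' : ¬ ℓ (j + 1) <+: q := by
    intro hx
    apply hnpre
    rw [hcat, ← hq]
    exact (List.prefix_append_right_inj P).mpr hx
  have hqne : q ≠ [] := by
    rintro rfl
    obtain ⟨m, rfl⟩ : ∃ m, j = m + 1 := ⟨j - 1, by omega⟩
    have hPm : P = cat ℓ (i + 1) m ++ ℓ (m + 1) := cat_concat ℓ (by omega)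
    have hsuf : ℓ (m + 1) <:+ ℓ 1 := by
      rw [← hq]
      simp [hPm]
    have hlen2 : (ℓ (m + 1)).length < (ℓ 1).length :=
      lt_of_le_of_lt (hpref (m + 1) (by omega) (i + 1) (by omega) (by omega)).length_le hlt_len
    exact antiLyndon_border hA1 (hanti (m + 1) (by omega) (by omega)).1
      (hpref (m + 1) (by omega) 1 le_rfl (by omega)) hsuf
      (fun he => by rw [he] at hlen2; omega)
  by_cases hqL : q <+: ℓ (j + 1)
  · exfalso
    have hlen2 : q.length < (ℓ 1).length :=
      lt_of_le_of_lt (hqL.length_le.trans hLi.length_le) hlt_len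
    exact antiLyndon_border hA1 hqne (hqL.trans hL1) ⟨P, hq⟩
      (fun he => by rw [he] at hlen2; omega)
  · obtain ⟨r, a, b, s, s', hab, hqd, hLd⟩ := not_prefix_decomp q (ℓ (j + 1)) hqL hnpre'
    -- ℓ 1 starts with r ++ b :: _
    obtain ⟨c, hc⟩ := hL1
    rw [hLd] at hc
    -- a < b
    have haltb : a < b := by
      have hanti1 : AntiLt (ℓ 1) (q ++ P) := hA1.2 P q hPne hqne hq.symm
      rw [AntiLt, ← hc, hqd] at hanti1
      have h4 : List.Lex (fun x y : α => y < x) (r ++ (b :: (s' ++ c)))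
          (r ++ (a :: (s ++ P))) := by
        have e1 : (r ++ b :: s') ++ c = r ++ (b :: (s' ++ c)) := by simp
        have e2 : (r ++ a :: s) ++ P = r ++ (a :: (s ++ P)) := by simp
        rwa [e1, e2] at hanti1
      have h5 := (lex_append_iff (r := fun x y : α => y < x)
        (fun x => lt_irrefl x) r _ _).mp h4
      cases h5 with
      | cons h5 => exact absurd rfl hab
      | rel h5 => exact h5
    have hl1 : ℓ 1 = P ++ r ++ a :: s := by rw [← hq, hqd, List.append_assoc]
    refine ⟨⟨r, s, s', a, b, haltb, hl1, hLd⟩, ?_, ?_⟩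
    · show List.Lex (· < ·) (ℓ 1) (cat ℓ (i + 1) (j + 1))
      rw [hcat, hl1, hLd, ← List.append_assoc P r (b :: s')]
      exact (lex_append_iff (r := fun x y : α => x < y)
        (fun x => lt_irrefl x) (P ++ r) _ _).mpr (List.Lex.rel haltb)
    · intro hx
      rw [hcat, hl1, hLd, ← List.append_assoc P r (b :: s')] at hx
      have := (List.prefix_append_right_inj (P ++ r)).mp hx
      exact hab (List.cons_prefix_cons.mp this).1
end
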